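/- Let B ∈ L(H,K) have closed range and A ∈ L(K)⁺ with N(A) ∩ R(B) = {0} and (A, R(B)) compatible. Then u ∈ H is an A-least squares solution of Bx = y if and only if B*A(Bu − y) = 0 (the weighted normal equations). -/

import Mathlib

/-!
With `S = √A` we have `re ⟪A z, z⟫ = ‖S z‖ ^ 2`, so `u` is an `A`-least squares solution of
`B x = y` exactly when it is an ordinary least squares solution of `(S B) x = S y`. The latter are
characterised by the normal equations `(S B)† (S y - S B u) = 0`, and `(S B)† S = B† S² = B† A`.
-/

open ContinuousLinearMap

theorem ContinuousLinearMap.IsPositive.re_inner_apply_self_eq_norm_sqrt_apply_sq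
    {E : Type*} [NormedAddCommGroup E] [InnerProductSpace ℂ E] [CompleteSpace E]
    {A : E →L[ℂ] E} (hA : A.IsPositive) (x : E) :
    (inner ℂ (A x) x).re = ‖CFC.sqrt A x‖ ^ 2 := by
  have hS : adjoint (CFC.sqrt A) = CFC.sqrt A := (CFC.sqrt_nonneg A).isSelfAdjoint
  rw [apply_norm_sq_eq_inner_adjoint_left, hS, ← mul_def,
    CFC.sqrt_mul_sqrt_self A ((nonneg_iff_isPositive A).mpr hA)]
  rfl

theorem stmt_16
    {H K : Type*}
    [NormedAddCommGroup H] [InnerProductSpace ℂ H] [CompleteSpace H]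
    [NormedAddCommGroup K] [InnerProductSpace ℂ K] [CompleteSpace K]
    (B : H →L[ℂ] K)
    (A : K →L[ℂ] K) (hA : A.IsPositive)
    (y : K) (u : H) :
    (∀ x : H,
        (inner ℂ (A (B u - y)) (B u - y) : ℂ).re ≤ (inner ℂ (A (B x - y)) (B x - y) : ℂ).re) ↔
    adjoint B (A (B u - y)) = 0 := by
  set S := CFC.sqrt A
  have hS : adjoint S = S := (CFC.sqrt_nonneg A).isSelfAdjoint
  have hSS : S ∘L S = A := CFC.sqrt_mul_sqrt_self A ((nonneg_iff_isPositive A).mpr hA)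
  have residual (x : H) : (inner ℂ (A (B x - y)) (B x - y)).re = ‖S y - (S ∘L B) x‖ ^ 2 := by
    rw [hA.re_inner_apply_self_eq_norm_sqrt_apply_sq, ← norm_neg, map_sub, neg_sub]
    rfl
  simp_rw [residual, sq_le_sq₀ (norm_nonneg _) (norm_nonneg _),
    forall_norm_sub_apply_le_iff_adjoint_apply_sub_eq_zero, adjoint_comp, hS, comp_apply,
    ← map_sub, ← comp_apply S S, hSS, ← neg_sub (B u), map_neg, neg_eq_zero]
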